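/- arXiv:1304.5460 — 6 statements merged into one kernel-verified Lean document; each statement's English description precedes it below -/
import Mathlib

section
/- Let J be a self-adjoint (n−1)×(n−1) Jacobi matrix with entries c_k ∈ ℝ on the diagonal and b_k ∈ ℂ∖{0} on the superdiagonal (with conjugates on the subdiagonal), having simple eigenvalues μ_1,...,μ_{n−1} with orthonormal eigenvectors u_k = (u_{k,1},...,u_{k,n−1})^T. Then for complex numbers b_{n−1} (the given superdiagonal entry) and any b_n ∈ ℂ∖{0}, setting β = b_1 b_2 ⋯ b_n, one has b_n u_{k,1} · b_{n−1} · conj(u_{k,n−1}) = β / χ'(μ_k) for each k, where χ(λ) = det(λI − J). In particular u_{k,1} ≠ 0 and u_{k,n−1} ≠ 0 for all k. -/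
/-!
Write `J = U D Uᴴ` with `U` the unitary matrix of eigenvectors. Then
`adj (μ_k - J) = U adj (μ_k - D) Uᴴ`, and every diagonal entry of `adj (μ_k - D)` except the
`k`-th contains the factor `μ_k - μ_k`, so `adj (μ_k - J) = χ'(μ_k) u_k u_kᴴ`. On the other hand
the `(1, n-1)` cofactor of any matrix `x - J` is, up to sign, the determinant of a triangular
matrix with diagonal `-b_1, …, -b_{n-2}`; hence `χ'(μ_k) u_{k,1} conj(u_{k,n-1}) = b_1 ⋯ b_{n-2}`,
which is nonzero.
-/

open Polynomial Matrix Finset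

noncomputable section

/-- Self-adjoint tridiagonal (Jacobi) matrix with real diagonal `c` and complex
superdiagonal `b` (conjugates on the subdiagonal). -/
def jacobiC (m : ℕ) (c : ℕ → ℝ) (b : ℕ → ℂ) : Matrix (Fin m) (Fin m) ℂ :=
  Matrix.of fun i j =>
    if (i : ℕ) = (j : ℕ) then ((c (i : ℕ) : ℝ) : ℂ)
    else if (i : ℕ) + 1 = (j : ℕ) then b (i : ℕ)
    else if (j : ℕ) + 1 = (i : ℕ) then (starRingEnd ℂ) (b (j : ℕ))
    else 0

section Spectral

variable {R n : Type*} [CommRing R] [StarRing R] [Fintype n] [DecidableEq n]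

theorem Matrix.adjugate_eq_det_smul_conjTranspose {U : Matrix n n R} (hU : Uᴴ * U = 1) :
    adjugate U = U.det • Uᴴ := by
  calc adjugate U = Uᴴ * (U * adjugate U) := by rw [← Matrix.mul_assoc, hU, Matrix.one_mul]
    _ = U.det • Uᴴ := by rw [mul_adjugate, Matrix.mul_smul, Matrix.mul_one]

theorem Matrix.adjugate_unitary_conj {U : Matrix n n R} (hU : Uᴴ * U = 1) (D : Matrix n n R) :
    adjugate (U * D * Uᴴ) = U * adjugate D * Uᴴ := by
  have hUH : Uᴴᴴ * Uᴴ = 1 := by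
    rw [conjTranspose_conjTranspose]
    exact mul_eq_one_comm.mp hU
  rw [adjugate_mul_distrib, adjugate_mul_distrib, adjugate_eq_det_smul_conjTranspose hU,
    adjugate_eq_det_smul_conjTranspose hUH, conjTranspose_conjTranspose, Matrix.smul_mul,
    Matrix.mul_smul, Matrix.mul_smul, smul_smul, ← det_mul, hU, det_one, one_smul,
    Matrix.mul_assoc]

theorem Matrix.adjugate_eigenvalue_smul_one_sub_apply (A : Matrix n n R) (μ : n → R)
    (u : n → n → R) (heig : ∀ k, A *ᵥ u k = μ k • u k)
    (horth : ∀ j k, star (u j) ⬝ᵥ u k = if j = k then 1 else 0) (k i j : n) :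
    adjugate (μ k • (1 : Matrix n n R) - A) i j
      = (∏ l ∈ univ.erase k, (μ k - μ l)) * u k i * star (u k j) := by
  set U : Matrix n n R := (of u)ᵀ
  have hU : Uᴴ * U = 1 := by
    ext j k
    simpa [U, Matrix.mul_apply, dotProduct, Matrix.one_apply] using horth j k
  have hAU : A * U = U * diagonal μ := by
    ext i k
    rw [mul_diagonal]
    simpa [U, Matrix.mul_apply, mulVec, dotProduct, mul_comm] using congrFun (heig k) i
  have hdecomp : μ k • (1 : Matrix n n R) - A = U * diagonal (fun l => μ k - μ l) * Uᴴ := by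
    have hU' : U * Uᴴ = 1 := mul_eq_one_comm.mp hU
    have hdiag : μ k • (1 : Matrix n n R) - diagonal μ = diagonal (fun l => μ k - μ l) := by
      ext i j
      by_cases hij : i = j <;> simp [hij]
    rw [← hdiag, Matrix.mul_sub, Matrix.sub_mul, ← hAU, Matrix.mul_assoc A, hU', Matrix.mul_one,
      Matrix.mul_smul, Matrix.mul_one, Matrix.smul_mul, hU']
  rw [hdecomp, adjugate_unitary_conj hU, adjugate_diagonal, Matrix.mul_apply,
    sum_eq_single k]
  · simp only [U, mul_diagonal, transpose_apply, of_apply, conjTranspose_apply]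
    ring
  · intro l _ hlk
    rw [mul_diagonal, prod_eq_zero (mem_erase.mpr ⟨hlk.symm, mem_univ k⟩) (sub_self _)]
    simp
  · simp

end Spectral

theorem Matrix.adjugate_zero_last_of_lowerHessenberg {R : Type*} [CommRing R] {m : ℕ}
    (M : Matrix (Fin (m + 1)) (Fin (m + 1)) R)
    (hM : ∀ i j : Fin (m + 1), (i : ℕ) + 1 < j → M i j = 0) :
    adjugate M 0 (Fin.last m) = ∏ i : Fin m, -M i.castSucc i.succ := by
  have hlower : (M.submatrix Fin.castSucc Fin.succ).IsLowerTriangular := by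
    intro i j (hij : i < j)
    exact hM _ _ (by simp only [Fin.val_castSucc, Fin.val_succ]; omega)
  rw [adjugate_fin_succ_eq_det_submatrix, Fin.succAbove_last, Fin.succAbove_zero,
    det_of_isLowerTriangular _ hlower, prod_neg, card_univ, Fintype.card_fin]
  simp

theorem jacobiC_apply_of_succ_lt {m : ℕ} (c : ℕ → ℝ) (b : ℕ → ℂ) {i j : Fin m}
    (hij : (i : ℕ) + 1 < j) : jacobiC m c b i j = 0 := by
  simp only [jacobiC, of_apply]
  rw [if_neg (by omega), if_neg (by omega), if_neg (by omega)]

theorem jacobiC_apply_castSucc_succ {m : ℕ} (c : ℕ → ℝ) (b : ℕ → ℂ) (i : Fin m) :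
    jacobiC (m + 1) c b i.castSucc i.succ = b i := by
  simp [jacobiC]

theorem adjugate_smul_one_sub_jacobiC_zero_last {m : ℕ} (c : ℕ → ℝ) (b : ℕ → ℂ) (x : ℂ) :
    adjugate (x • (1 : Matrix _ _ ℂ) - jacobiC (m + 1) c b) 0 (Fin.last m)
      = ∏ j ∈ range m, b j := by
  rw [adjugate_zero_last_of_lowerHessenberg, ← Fin.prod_univ_eq_prod_range]
  · refine prod_congr rfl fun i _ => ?_
    rw [Matrix.sub_apply, Matrix.smul_apply, one_apply_ne Fin.castSucc_lt_succ.ne,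
      jacobiC_apply_castSucc_succ]
    simp
  · intro i j hij
    rw [Matrix.sub_apply, Matrix.smul_apply, one_apply_ne (fun h => by simp [h] at hij),
      jacobiC_apply_of_succ_lt c b hij]
    simp

theorem eval_derivative_prod_X_sub_C {R ι : Type*} [CommRing R] [Fintype ι] [DecidableEq ι]
    (μ : ι → R) (k : ι) :
    (∏ j, (X - C (μ j))).derivative.eval (μ k) = ∏ l ∈ univ.erase k, (μ k - μ l) := by
  rw [← Lagrange.nodal, Lagrange.eval_nodal_derivative_eval_node_eq (mem_univ k),
    Lagrange.eval_nodal]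

/-- with `J` the `(n−1)×(n−1)` (here size `m = n−1`) self-adjoint Jacobi
matrix with off-diagonal entries `b 0, …, b (m−2)`, further nonzero numbers
`b (m−1)` (= b_{n−1}) and `b m` (= b_n), `β = b_1⋯b_n`, simple eigenvalues `μ_k`,
and orthonormal eigenvectors `u_k`, one has
`b_n u_{k,1} b_{n−1} conj(u_{k,n−1}) = β / χ'(μ_k)`, and in particular
`u_{k,1} ≠ 0` and `u_{k,n−1} ≠ 0`. -/
theorem stmt4 (m : ℕ) (hm : 2 ≤ m) (c : ℕ → ℝ) (b : ℕ → ℂ)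
    (hb : ∀ k : ℕ, k < m + 1 → b k ≠ 0)
    (μ : Fin m → ℝ)
    (u : Fin m → (Fin m → ℂ))
    (heig : ∀ k, (jacobiC m c b).mulVec (u k) = ((μ k : ℂ)) • u k)
    (horth : ∀ j k, star (u j) ⬝ᵥ u k = if j = k then (1 : ℂ) else 0)
    (hchar : (jacobiC m c b).charpoly = ∏ j, (X - C ((μ j : ℂ)))) :
    ∀ k : Fin m,
      b m * u k ⟨0, by omega⟩ * b (m - 1) * (starRingEnd ℂ) (u k ⟨m - 1, by omega⟩)
          = (∏ j ∈ Finset.range (m + 1), b j)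
              / ((jacobiC m c b).charpoly.derivative.eval ((μ k : ℂ))) ∧
      u k ⟨0, by omega⟩ ≠ 0 ∧ u k ⟨m - 1, by omega⟩ ≠ 0 := by
  intro k
  obtain ⟨m, rfl⟩ : ∃ m', m = m' + 1 := ⟨m - 1, by omega⟩
  have hkey : (jacobiC (m + 1) c b).charpoly.derivative.eval (μ k : ℂ) * u k 0
      * star (u k (Fin.last m)) = ∏ j ∈ range m, b j := by
    rw [hchar, eval_derivative_prod_X_sub_C (fun j => (μ j : ℂ)),
      ← adjugate_smul_one_sub_jacobiC_zero_last c b (μ k),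
      adjugate_eigenvalue_smul_one_sub_apply _ _ u heig horth]
  have hprod : ∏ j ∈ range m, b j ≠ 0 :=
    prod_ne_zero_iff.mpr fun j hj => hb j (by simp at hj; omega)
  have hderiv : (jacobiC (m + 1) c b).charpoly.derivative.eval (μ k : ℂ) ≠ 0 := by
    intro h
    rw [h, zero_mul, zero_mul] at hkey
    exact hprod hkey.symm
  refine ⟨?_, fun h => hprod ?_, fun h => hprod ?_⟩
  · show b (m + 1) * u k 0 * b m * star (u k (Fin.last m)) = _
    rw [prod_range_succ, prod_range_succ, eq_div_iff hderiv, ← hkey]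
    ring
  · change u k 0 = 0 at h
    rw [← hkey, h, mul_zero, zero_mul]
  · change u k (Fin.last m) = 0 at h
    rw [← hkey, h, star_zero, mul_zero]
end
end

section
/- With J_n as in the class 𝒥_n (corner-bordered complex Jacobi matrix) and J_{n−1} its leading principal submatrix with simple eigenvalues μ_k and orthonormal eigenvectors u_k, the Schur complement identity χ_n(λ)/χ_{n−1}(λ) = λ − a_n − Σ_{k=1}^{n−1} |b_n u_{k,1} + conj(b_{n−1}) u_{k,n−1}|² / (λ − μ_k) holds for all λ not an eigenvalue of J_{n−1}. -/
/-! Splitting off the last index, `J_n` is the bordered matrix `[[J_{n−1}, w*], [w, a_n]]`, where `w`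
is the last row of `J_n` without its corner, and the Schur complement gives
`χ_n(λ) = χ_{n−1}(λ) · (λ − a_n − w (λ − J_{n−1})⁻¹ w*)`. The orthonormal eigenbasis yields the
resolvent `(λ − J_{n−1})⁻¹ = Σ_k u_k u_k* / (λ − μ_k)`, so `w (λ − J_{n−1})⁻¹ w*` is
`Σ_k |w ⬝ u_k|² / (λ − μ_k)`; finally `w` has only the two nonzero entries `b_n` and
`conj b_{n−1}`. -/

open Polynomial Matrix Finset

noncomputable section

/-- The corner-bordered complex Jacobi matrix of the class `𝒥_n`: real diagonal
entries `c 0, …, c (n−2)`, complex entry `a` at position `(n−1, n−1)`, superdiagonal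
entries `b 0, …, b (n−2)` with their conjugates on the subdiagonal, and corner entries
`conj (b (n−1))` at `(0, n−1)` and `b (n−1)` at `(n−1, 0)`. -/
def cornerJacobi (n : ℕ) (c : ℕ → ℝ) (b : ℕ → ℂ) (a : ℂ) :
    Matrix (Fin n) (Fin n) ℂ :=
  Matrix.of fun i j =>
    if (i : ℕ) = (j : ℕ) then (if (i : ℕ) = n - 1 then a else ((c (i : ℕ) : ℝ) : ℂ))
    else if (i : ℕ) = 0 ∧ (j : ℕ) = n - 1 then (starRingEnd ℂ) (b (n - 1))
    else if (i : ℕ) = n - 1 ∧ (j : ℕ) = 0 then b (n - 1)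
    else if (i : ℕ) + 1 = (j : ℕ) then b (i : ℕ)
    else if (j : ℕ) + 1 = (i : ℕ) then (starRingEnd ℂ) (b (j : ℕ))
    else 0

/-- The leading principal `(n−1)×(n−1)` submatrix of `cornerJacobi n c b a`. -/
def cornerJacobiSub (n : ℕ) (c : ℕ → ℝ) (b : ℕ → ℂ) (a : ℂ) :
    Matrix (Fin (n - 1)) (Fin (n - 1)) ℂ :=
  (cornerJacobi n c b a).submatrix (Fin.castLE (Nat.sub_le n 1)) (Fin.castLE (Nat.sub_le n 1))

section Bordered

variable {R ι : Type*} [CommRing R] [Fintype ι] [DecidableEq ι]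

theorem Matrix.eval_charpoly_fromBlocks_replicate (A : Matrix ι ι R) (v w : ι → R) (d t : R)
    [Invertible (scalar ι t - A)] :
    (fromBlocks A (replicateCol (Fin 1) v) (replicateRow (Fin 1) w) !![d]).charpoly.eval t
      = A.charpoly.eval t * (t - d - w ⬝ᵥ (⅟(scalar ι t - A) *ᵥ v)) := by
  have hblocks : scalar (ι ⊕ Fin 1) t
      - fromBlocks A (replicateCol (Fin 1) v) (replicateRow (Fin 1) w) !![d]
      = fromBlocks (scalar ι t - A) (replicateCol (Fin 1) (-v)) (replicateRow (Fin 1) (-w))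
          !![t - d] := by
    ext (i | i) (j | j) <;> simp [scalar_apply, diagonal_apply, Fin.fin_one_eq_zero]
  rw [eval_charpoly, eval_charpoly, hblocks, det_fromBlocks₁₁, det_fin_one, Matrix.mul_assoc, ← replicateCol_mulVec, replicateRow_mul_replicateCol, mulVec_neg,
    neg_dotProduct_neg]
  rfl

end Bordered

section Eigenbasis

variable {K ι : Type*} [Field K] [StarRing K] [Fintype ι] [DecidableEq ι]

theorem Matrix.sum_vecMulVec_star_eq_one {u : ι → ι → K}
    (horth : ∀ j k, star (u j) ⬝ᵥ u k = if j = k then 1 else 0) :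
    ∑ k, vecMulVec (u k) (star (u k)) = 1 := by
  set U : Matrix ι ι K := (of u)ᵀ
  have hUU : Uᴴ * U = 1 := by
    ext j k
    simpa [U, mul_apply, one_apply, dotProduct] using horth j k
  calc ∑ k, vecMulVec (u k) (star (u k)) = U * Uᴴ := by
        ext i j
        simp [U, sum_apply, vecMulVec_apply, mul_apply]
    _ = 1 := mul_eq_one_comm.mp hUU

theorem Matrix.scalar_sub_mul_sum_inv_smul_vecMulVec {A : Matrix ι ι K} {μ : ι → K}
    {u : ι → ι → K} (heig : ∀ k, A *ᵥ u k = μ k • u k)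
    (horth : ∀ j k, star (u j) ⬝ᵥ u k = if j = k then 1 else 0) {t : K} (ht : ∀ k, t ≠ μ k) :
    (scalar ι t - A) * ∑ k, (t - μ k)⁻¹ • vecMulVec (u k) (star (u k)) = 1 := by
  have hterm (k : ι) : (scalar ι t - A) * ((t - μ k)⁻¹ • vecMulVec (u k) (star (u k)))
      = vecMulVec (u k) (star (u k)) := by
    have hvec : (scalar ι t - A) *ᵥ u k = (t - μ k) • u k := by
      rw [sub_mulVec, heig k, sub_smul, scalar_apply, ← smul_one_eq_diagonal, smul_mulVec,
        one_mulVec]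
    rw [Matrix.mul_smul, mul_vecMulVec, hvec, smul_vecMulVec, smul_smul,
      inv_mul_cancel₀ (sub_ne_zero.mpr (ht k)), one_smul]
  rw [Finset.mul_sum, Finset.sum_congr rfl fun k _ => hterm k, sum_vecMulVec_star_eq_one horth]

theorem Matrix.eval_charpoly_fromBlocks_div_eval_charpoly {A : Matrix ι ι K} {μ : ι → K}
    {u : ι → ι → K} (heig : ∀ k, A *ᵥ u k = μ k • u k)
    (horth : ∀ j k, star (u j) ⬝ᵥ u k = if j = k then 1 else 0) (v w : ι → K) (d : K) {t : K}
    (ht : ∀ k, t ≠ μ k) :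
    (fromBlocks A (replicateCol (Fin 1) v) (replicateRow (Fin 1) w) !![d]).charpoly.eval t
        / A.charpoly.eval t
      = t - d - ∑ k, (w ⬝ᵥ u k) * (star (u k) ⬝ᵥ v) / (t - μ k) := by
  have hres := scalar_sub_mul_sum_inv_smul_vecMulVec heig horth ht
  let _ := invertibleOfRightInverse _ _ hres
  have hdet : A.charpoly.eval t ≠ 0 := by
    rw [eval_charpoly]
    exact (isUnit_det_of_invertible _).ne_zero
  rw [eval_charpoly_fromBlocks_replicate, mul_div_cancel_left₀ _ hdet, invOf_eq_right_inv hres]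
  simp only [sum_mulVec, dotProduct_sum, smul_mulVec, vecMulVec_mulVec, dotProduct_smul]
  congr 2 with k
  simp only [MulOpposite.smul_eq_mul_unop, MulOpposite.unop_op, smul_eq_mul]
  rw [inv_mul_eq_div]

end Eigenbasis

/-- The last row of `cornerJacobi n c b a` without its corner entry (indices are 0-based, so
`b (n - 1)` is the paper's `b_n`). -/
def cornerJacobiLastRow (n : ℕ) (b : ℕ → ℂ) : Fin (n - 1) → ℂ := fun j =>
  if (j : ℕ) = 0 then b (n - 1) else if (j : ℕ) = n - 2 then starRingEnd ℂ (b (n - 2)) else 0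

theorem charpoly_cornerJacobi {n : ℕ} (hn : 0 < n) (c : ℕ → ℝ) (b : ℕ → ℂ) (a : ℂ) :
    (cornerJacobi n c b a).charpoly
      = (fromBlocks (cornerJacobiSub n c b a)
          (replicateCol (Fin 1) (star (cornerJacobiLastRow n b)))
          (replicateRow (Fin 1) (cornerJacobiLastRow n b)) !![a]).charpoly := by
  let e : Fin (n - 1) ⊕ Fin 1 ≃ Fin n := finSumFinEquiv.trans (finCongr (by omega))
  rw [← charpoly_reindex e.symm]
  congr 1
  ext (i | i) (j | j) <;>
    simp only [e, reindex_apply, Equiv.symm_symm, submatrix_apply, Equiv.coe_trans,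
      Function.comp_apply, finSumFinEquiv_apply_left, finSumFinEquiv_apply_right, finCongr_apply,
      fromBlocks_apply₁₁, fromBlocks_apply₁₂, fromBlocks_apply₂₁, fromBlocks_apply₂₂,
      replicateCol_apply, replicateRow_apply, Pi.star_apply, cons_val_fin_one, cornerJacobiSub,
      cornerJacobi, cornerJacobiLastRow, of_apply, Fin.val_cast, Fin.val_castAdd, Fin.val_castLE,
      Fin.val_natAdd, Fin.val_eq_zero, add_zero] <;>
    split_ifs <;> first | rfl | omega | simp_all

theorem cornerJacobiLastRow_dotProduct {n : ℕ} (hn : 3 ≤ n) (b : ℕ → ℂ) (x : Fin (n - 1) → ℂ) :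
    cornerJacobiLastRow n b ⬝ᵥ x
      = b (n - 1) * x ⟨0, Nat.sub_pos_of_lt (by omega)⟩
        + starRingEnd ℂ (b (n - 2)) * x ⟨n - 2, Nat.sub_lt_sub_left (by omega) one_lt_two⟩ := by
  rw [dotProduct,
    Fintype.sum_eq_add ⟨0, by omega⟩ ⟨n - 2, by omega⟩ (by rw [Ne, Fin.mk.injEq]; omega)]
  · simp [cornerJacobiLastRow, show n - 2 ≠ 0 by omega]
  · intro j hj
    simp only [ne_eq, Fin.ext_iff, cornerJacobiLastRow] at hj ⊢
    simp [hj]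

/-- the Schur complement identity
`χ_n(λ)/χ_{n−1}(λ) = λ − a_n − Σ_k |b_n u_{k,1} + conj(b_{n−1}) u_{k,n−1}|²/(λ − μ_k)`
for all `λ` not an eigenvalue of the leading submatrix `J_{n−1}`. -/
theorem stmt8 (n : ℕ) (hn : 3 ≤ n) (c : ℕ → ℝ) (b : ℕ → ℂ) (a : ℂ)
    (μ : Fin (n - 1) → ℝ)
    (u : Fin (n - 1) → (Fin (n - 1) → ℂ))
    (heig : ∀ k, (cornerJacobiSub n c b a).mulVec (u k) = ((μ k : ℂ)) • u k)
    (horth : ∀ j k, star (u j) ⬝ᵥ u k = if j = k then (1 : ℂ) else 0) :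
    ∀ lam : ℂ, (∀ k, lam ≠ (μ k : ℂ)) →
      ((cornerJacobi n c b a).charpoly.eval lam)
          / ((cornerJacobiSub n c b a).charpoly.eval lam)
        = lam - a - ∑ k : Fin (n - 1),
            ((‖b (n - 1) * u k ⟨0, by omega⟩
                + (starRingEnd ℂ) (b (n - 2)) * u k ⟨n - 2, by omega⟩‖ ^ 2 : ℝ) : ℂ)
              / (lam - (μ k : ℂ)) := by
  intro lam hlam
  rw [charpoly_cornerJacobi (by omega),
    eval_charpoly_fromBlocks_div_eval_charpoly heig horth _ _ _ hlam]
  congr 2 with k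
  rw [star_dotProduct_star, Complex.star_def, RCLike.mul_conj, cornerJacobiLastRow_dotProduct hn]
  push_cast
  rfl
end
end

section
/- Let J_n ∈ 𝒥_n with a_n ∈ ℝ. Then every eigenvalue of J_n is real, and the eigenvalues of J_n have multiplicity at most 2; moreover, any eigenvalue of J_n of multiplicity 2 (as a root of the characteristic polynomial) is also an eigenvalue of the leading principal (n−1)×(n−1) submatrix J_{n−1}. -/
/-!
`J_n` is Hermitian, so its eigenvalues are real and it is diagonalizable: the multiplicity of an
eigenvalue `λ` as a root of the characteristic polynomial is the dimension of its eigenspace.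
Because the `b_k` are nonzero, the middle rows of `J_n x = λ x` form a three-term recurrence that
determines `x` from `x_0` and `x_1`, so every eigenspace has dimension at most `2`. A
two-dimensional eigenspace contains a nonzero vector with vanishing last coordinate, and its
truncation is an eigenvector of `J_{n−1}` for `λ`.
-/

open Polynomial Matrix Finset

noncomputable section

namespace Matrix

theorem IsHermitian.rootMultiplicity_charpoly_eq_finrank_eigenspace {𝕜 ι : Type*} [RCLike 𝕜]
    [Fintype ι] [DecidableEq ι] {A : Matrix ι ι 𝕜} (hA : A.IsHermitian) (μ : 𝕜) :
    A.charpoly.rootMultiplicity μ = Module.finrank 𝕜 (Module.End.eigenspace (toLin' A) μ) := by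
  have hEuclid : Module.End.IsSemisimple (toEuclideanLin A) :=
    Module.End.isFinitelySemisimple_iff_isSemisimple.mp
      (isSymmetric_toEuclideanLin_iff.mpr hA).isFinitelySemisimple
  -- `toEuclideanLin A` is `toLin' A` read through `WithLp 2 (ι → 𝕜) ≃ₗ (ι → 𝕜)`
  have hSemisimple : Module.End.IsSemisimple (toLin' A) :=
    ((WithLp.linearEquiv 2 𝕜 (ι → 𝕜)).isSemisimple_iff _ _ rfl).mp hEuclid
  rw [← charpoly_toLin', ← LinearMap.finrank_maxGenEigenspace_eq,
    hSemisimple.isFinitelySemisimple.maxGenEigenspace_eq_eigenspace]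

theorem IsHermitian.im_eq_zero_of_isRoot_charpoly {𝕜 ι : Type*} [RCLike 𝕜]
    [Fintype ι] [DecidableEq ι] {A : Matrix ι ι 𝕜} (hA : A.IsHermitian) {μ : 𝕜}
    (hμ : A.charpoly.IsRoot μ) : RCLike.im μ = 0 := by
  have hroot : μ ∈ A.charpoly.roots := (mem_roots (charpoly_monic A).ne_zero).mpr hμ
  rw [hA.roots_charpoly_eq_eigenvalues] at hroot
  obtain ⟨i, -, rfl⟩ := Multiset.mem_map.mp hroot
  simp

theorem submatrix_mulVec_comp_of_forall_notMem_range {R k l l' m : Type*}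
    [NonUnitalNonAssocSemiring R] [Fintype l] [Fintype m] (M : Matrix k m R) (r : l' → k)
    {e : l → m} (he : Function.Injective e)
    {x : m → R} (hx : ∀ i ∉ Set.range e, x i = 0) :
    M.submatrix r e *ᵥ (x ∘ e) = (M *ᵥ x) ∘ r := by
  funext i
  exact Fintype.sum_of_injective e he _ _ (fun j hj => by simp [hx j hj]) fun _ => rfl

theorem isRoot_charpoly_submatrix_of_mulVec_eq {K ι κ : Type*} [Field K] [Fintype ι]
    [DecidableEq ι] [Fintype κ] [DecidableEq κ] (M : Matrix ι ι K) {e : κ → ι}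
    (he : Function.Injective e) {μ : K} {x : ι → K} (hMx : M *ᵥ x = μ • x) (hx : x ≠ 0)
    (hsupp : ∀ i ∉ Set.range e, x i = 0) : (M.submatrix e e).charpoly.IsRoot μ := by
  rw [← charpoly_toLin', ← Module.End.hasEigenvalue_iff_isRoot_charpoly]
  refine Module.End.hasEigenvalue_of_hasEigenvector (x := x ∘ e) ⟨?_, ?_⟩
  · rw [Module.End.mem_eigenspace_iff, toLin'_apply,
      submatrix_mulVec_comp_of_forall_notMem_range M e he hsupp, hMx]
    rfl
  · intro h
    apply hx
    funext i
    by_cases hi : i ∈ Set.range e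
    · obtain ⟨j, rfl⟩ := hi
      exact congrFun h j
    · exact hsupp i hi

theorem isRoot_charpoly_submatrix_castLE_of_two_le_finrank_eigenspace {K : Type*} [Field K]
    {n : ℕ} (M : Matrix (Fin n) (Fin n) K) {μ : K}
    (h : 2 ≤ Module.finrank K (Module.End.eigenspace (toLin' M) μ)) :
    (M.submatrix (Fin.castLE (Nat.sub_le n 1)) (Fin.castLE (Nat.sub_le n 1))).charpoly.IsRoot μ := by
  set V := Module.End.eigenspace (toLin' M) μ
  have hn : 0 < n := by
    have := Submodule.finrank_le V
    rw [Module.finrank_fin_fun] at this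
    omega
  let last : V →ₗ[K] K := (LinearMap.proj ⟨n - 1, by omega⟩).comp V.subtype
  have hker : LinearMap.ker last ≠ ⊥ :=
    last.ker_ne_bot_of_finrank_lt (by rw [Module.finrank_self]; omega)
  obtain ⟨⟨x, hxV⟩, hx_last, hx0⟩ := Submodule.exists_mem_ne_zero_of_ne_bot hker
  refine isRoot_charpoly_submatrix_of_mulVec_eq M (Fin.castLE_injective _)
    (Module.End.mem_eigenspace_iff.mp hxV) (fun h => hx0 (by simp [h])) fun i hi => ?_
  have hi_last : (i : ℕ) = n - 1 := by
    by_contra hne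
    exact hi ⟨⟨i, by omega⟩, rfl⟩
  rw [show i = ⟨n - 1, by omega⟩ from Fin.ext hi_last]
  exact LinearMap.mem_ker.mp hx_last

end Matrix

section cornerJacobi

variable {n : ℕ} {c : ℕ → ℝ} {b : ℕ → ℂ}

theorem cornerJacobi_isHermitian (a : ℝ) : (cornerJacobi n c b (a : ℂ)).IsHermitian := by
  ext i j
  simp only [conjTranspose_apply, cornerJacobi, of_apply]
  split_ifs <;> first | omega | simp_all

theorem cornerJacobi_row_succ {a : ℂ} (m : ℕ) (hm : m + 2 < n) :
    cornerJacobi n c b a ⟨m + 1, by omega⟩ =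
      Pi.single ⟨m, by omega⟩ (starRingEnd ℂ (b m)) +
        Pi.single ⟨m + 1, by omega⟩ (c (m + 1) : ℂ) + Pi.single ⟨m + 2, hm⟩ (b (m + 1)) := by
  funext j
  simp only [cornerJacobi, of_apply, Pi.add_apply, Pi.single_apply, Fin.ext_iff]
  split_ifs <;> first | omega | (simp only [false_and] at *; done) | (subst_vars; simp)

theorem cornerJacobi_eigenvector_eq_zero {a : ℂ} (hb : ∀ k < n, b k ≠ 0) {μ : ℂ}
    {x : Fin n → ℂ} (hx : cornerJacobi n c b a *ᵥ x = μ • x)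
    (h01 : ∀ i : Fin n, (i : ℕ) < 2 → x i = 0) : x = 0 := by
  have hzero : ∀ k (hk : k < n), x ⟨k, hk⟩ = 0 := by
    intro k
    induction k using Nat.strong_induction_on with
    | _ k ih =>
      intro hk
      rcases k with _ | _ | m
      · exact h01 _ (by simp)
      · exact h01 _ (by simp)
      -- row `m + 1`: `conj (b m) x m + c (m + 1) x (m + 1) + b (m + 1) x (m + 2) = μ x (m + 1)`
      have hrow : cornerJacobi n c b a ⟨m + 1, by omega⟩ ⬝ᵥ x = μ * x ⟨m + 1, by omega⟩ :=
        congrFun hx _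
      rw [cornerJacobi_row_succ m hk, add_dotProduct, add_dotProduct, single_dotProduct,
        single_dotProduct, single_dotProduct, ih m (by omega), ih (m + 1) (by omega)] at hrow
      simpa [hb (m + 1) (by omega)] using hrow
  funext i
  exact hzero i i.isLt

theorem finrank_eigenspace_cornerJacobi_le_two {a : ℂ} (hn : 2 ≤ n) (hb : ∀ k < n, b k ≠ 0)
    (μ : ℂ) : Module.finrank ℂ (Module.End.eigenspace (toLin' (cornerJacobi n c b a)) μ) ≤ 2 := by
  set V := Module.End.eigenspace (toLin' (cornerJacobi n c b a)) μ
  let firstTwo : V →ₗ[ℂ] (Fin 2 → ℂ) :=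
    LinearMap.pi fun k => (LinearMap.proj (Fin.castLE hn k)).comp V.subtype
  have hinj : Function.Injective firstTwo := by
    rw [← LinearMap.ker_eq_bot, LinearMap.ker_eq_bot']
    rintro ⟨x, hxV⟩ hx
    exact Subtype.ext (cornerJacobi_eigenvector_eq_zero hb
      (Module.End.mem_eigenspace_iff.mp hxV) fun i hi => congrFun hx ⟨i, hi⟩)
  simpa using LinearMap.finrank_le_finrank_of_injective hinj

end cornerJacobi

/-- if `J_n ∈ 𝒥_n` has real `(n,n)` entry `a_n`, then all its eigenvalues
are real, each of multiplicity at most `2`, and any eigenvalue of multiplicity `2` is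
an eigenvalue of the leading principal submatrix `J_{n−1}`. -/
theorem stmt9 (n : ℕ) (hn : 3 ≤ n) (c : ℕ → ℝ) (b : ℕ → ℂ) (a : ℝ)
    (hb : ∀ k : ℕ, k < n → b k ≠ 0) :
    (∀ lam : ℂ, (cornerJacobi n c b (a : ℂ)).charpoly.IsRoot lam → lam.im = 0) ∧
    (∀ lam : ℂ, (cornerJacobi n c b (a : ℂ)).charpoly.rootMultiplicity lam ≤ 2) ∧
    (∀ lam : ℂ, (cornerJacobi n c b (a : ℂ)).charpoly.rootMultiplicity lam = 2 →
      (cornerJacobiSub n c b (a : ℂ)).charpoly.IsRoot lam) := by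
  have hA := cornerJacobi_isHermitian (n := n) (c := c) (b := b) a
  refine ⟨fun lam hlam => hA.im_eq_zero_of_isRoot_charpoly hlam, fun lam => ?_, fun lam hlam => ?_⟩
  · rw [hA.rootMultiplicity_charpoly_eq_finrank_eigenspace]
    exact finrank_eigenspace_cornerJacobi_le_two (by omega) hb lam
  · rw [hA.rootMultiplicity_charpoly_eq_finrank_eigenspace] at hlam
    exact isRoot_charpoly_submatrix_castLE_of_two_le_finrank_eigenspace _ hlam.ge
end
end

section
/- Let J_n ∈ 𝒥_n with β = b_1⋯b_n nonreal and Im a_n > 0. Then every eigenvalue λ of J_n satisfies Im λ > 0 (all eigenvalues lie in the open upper half-plane). Symmetrically, if Im a_n < 0, every eigenvalue satisfies Im λ < 0. -/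
open Polynomial Matrix Finset

noncomputable section

open ComplexConjugate

set_option maxHeartbeats 1000000

namespace Stmt11Aux

lemma cj_apply (n : ℕ) (c : ℕ → ℝ) (b : ℕ → ℂ) (a : ℂ) (i j : Fin n) :
    cornerJacobi n c b a i j =
      if (i : ℕ) = (j : ℕ) then (if (i : ℕ) = n - 1 then a else ((c (i : ℕ) : ℝ) : ℂ))
      else if (i : ℕ) = 0 ∧ (j : ℕ) = n - 1 then (starRingEnd ℂ) (b (n - 1))
      else if (i : ℕ) = n - 1 ∧ (j : ℕ) = 0 then b (n - 1)
      else if (i : ℕ) + 1 = (j : ℕ) then b (i : ℕ)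
      else if (j : ℕ) + 1 = (i : ℕ) then (starRingEnd ℂ) (b (j : ℕ))
      else 0 := rfl

lemma exists_eigenvec {n : ℕ} (M : Matrix (Fin n) (Fin n) ℂ) (lam : ℂ)
    (h : M.charpoly.IsRoot lam) : ∃ v : Fin n → ℂ, v ≠ 0 ∧ M *ᵥ v = lam • v := by
  have hdet : (lam • (1 : Matrix (Fin n) (Fin n) ℂ) - M).det = 0 := by
    have h1 : (charmatrix M).map (Polynomial.evalRingHom lam) = lam • 1 - M := by
      ext i j
      by_cases hij : i = j
      · subst hij
        simp [charmatrix_apply_eq, Matrix.smul_apply, Matrix.one_apply_eq]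
      · simp [charmatrix_apply_ne _ _ _ hij, Matrix.smul_apply, Matrix.one_apply_ne hij]
    have h2 := (RingHom.map_det (Polynomial.evalRingHom lam) (charmatrix M))
    rw [RingHom.mapMatrix_apply, h1] at h2
    rw [← h2]
    simpa [Matrix.charpoly] using h
  obtain ⟨v, hv, hveq⟩ := Matrix.exists_mulVec_eq_zero_iff.mpr hdet
  refine ⟨v, hv, ?_⟩
  rw [Matrix.sub_mulVec, Matrix.smul_mulVec, Matrix.one_mulVec, sub_eq_zero] at hveq
  exact hveq.symm

lemma cj_map_conj (n : ℕ) (hn : 3 ≤ n) (c : ℕ → ℝ) (b : ℕ → ℂ) (a : ℂ) :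
    (cornerJacobi n c b a).map (starRingEnd ℂ) =
      cornerJacobi n c (fun k => conj (b k)) (conj a) := by
  ext i j
  simp only [Matrix.map_apply, cj_apply]
  split_ifs <;> simp

lemma cj_diff (n : ℕ) (hn : 3 ≤ n) (c : ℕ → ℝ) (b : ℕ → ℂ) (a : ℂ) (i j : Fin n) :
    cornerJacobi n c b a i j - conj (cornerJacobi n c b a j i) =
      if (i : ℕ) = n - 1 ∧ (j : ℕ) = n - 1 then a - conj a else 0 := by
  rcases eq_or_ne (i:ℕ) (j:ℕ) with hij | hij
  · simp only [cj_apply, hij]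
    split_ifs <;> first | (exfalso; omega) | simp [Complex.conj_ofReal] | ring
  · simp only [cj_apply]
    split_ifs <;> first | (exfalso; omega) | simp [Complex.conj_ofReal] | ring


lemma upper (n : ℕ) (hn : 3 ≤ n) (c : ℕ → ℝ) (b : ℕ → ℂ) (a : ℂ)
    (hb : ∀ k : ℕ, k < n → b k ≠ 0)
    (hβ : (∏ k ∈ Finset.range n, b k).im ≠ 0)
    (ha : 0 < a.im) (lam : ℂ)
    (hroot : (cornerJacobi n c b a).charpoly.IsRoot lam) : 0 < lam.im := by
  by_contra hlt
  push_neg at hlt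
  obtain ⟨v, hv0, hev⟩ := exists_eigenvec _ lam hroot
  set J := cornerJacobi n c b a with hJ
  have hrow : ∀ i : Fin n, ∑ j, J i j * v j = lam * v i := by
    intro i
    have := congrFun hev i
    simpa [Matrix.mulVec, dotProduct] using this
  have h0n : 0 < n := by omega
  obtain ⟨last, hlast⟩ : ∃ l : Fin n, (l : ℕ) = n - 1 := ⟨⟨n - 1, by omega⟩, rfl⟩
  -- quadratic form identity
  set S : ℂ := ∑ i, conj (v i) * ∑ j, J i j * v j with hS
  set Nc : ℂ := ∑ i, conj (v i) * v i with hNc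
  have hS1 : S = lam * Nc := by
    rw [hS, hNc, Finset.mul_sum]
    refine Finset.sum_congr rfl fun i _ => ?_
    rw [hrow i]; ring
  have hNreal : conj Nc = Nc := by
    rw [hNc, map_sum]
    refine Finset.sum_congr rfl fun i _ => ?_
    simp [mul_comm]
  have hS2 : conj S = conj lam * Nc := by
    rw [hS1, _root_.map_mul, hNreal]
  have hconjS : conj S = ∑ i, ∑ j, conj (v i) * conj (J j i) * v j := by
    rw [hS]
    simp only [map_sum, _root_.map_mul, Complex.conj_conj, Finset.mul_sum]
    rw [Finset.sum_comm]
    exact Finset.sum_congr rfl fun i _ => Finset.sum_congr rfl fun j _ => by ring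
  have hSsub : S - conj S = (a - conj a) * (conj (v last) * v last) := by
    have expand : S - conj S = ∑ i, ∑ j,
        (conj (v i) * (J i j * v j) - conj (v i) * conj (J j i) * v j) := by
      rw [hconjS, hS, ← Finset.sum_sub_distrib]
      refine Finset.sum_congr rfl fun i _ => ?_
      rw [Finset.mul_sum, ← Finset.sum_sub_distrib]
    rw [expand]
    have : ∀ i j : Fin n, conj (v i) * (J i j * v j) - conj (v i) * conj (J j i) * v j
        = if i = last ∧ j = last then (a - conj a) * (conj (v last) * v last) else 0 := by
      intro i j
      have hd := cj_diff n hn c b a i j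
      have : conj (v i) * (J i j * v j) - conj (v i) * conj (J j i) * v j
          = conj (v i) * v j * (J i j - conj (J j i)) := by ring
      rw [this, hd]
      by_cases h1 : (i:ℕ) = n - 1 ∧ (j:ℕ) = n - 1
      · have hi : i = last := Fin.ext (h1.1.trans hlast.symm)
        have hj : j = last := Fin.ext (h1.2.trans hlast.symm)
        rw [if_pos h1, if_pos ⟨hi, hj⟩, hi, hj]; ring
      · have h2 : ¬(i = last ∧ j = last) := by
          simp only [Fin.ext_iff, hlast]
          exact h1
        rw [if_neg h1, if_neg h2, mul_zero]
    simp only [this]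
    simp [ite_and, Finset.sum_ite_eq']
  -- real part bookkeeping
  set N : ℝ := ∑ i, Complex.normSq (v i) with hN
  have hNc' : Nc = (N : ℂ) := by
    rw [hNc, hN]
    push_cast
    refine Finset.sum_congr rfl fun i _ => ?_
    rw [← Complex.mul_conj]; ring
  have hkey : (lam - conj lam) * (N : ℂ)
      = (a - conj a) * (Complex.normSq (v last) : ℂ) := by
    have h1 : S - conj S = (lam - conj lam) * Nc := by rw [hS2, hS1]; ring
    have h2 : (conj (v last) * v last : ℂ) = (Complex.normSq (v last) : ℂ) := by
      rw [← Complex.mul_conj]; ring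
    rw [← hNc', ← h1, hSsub, h2]
  have hIm : lam.im * N = a.im * Complex.normSq (v last) := by
    have := congrArg Complex.im hkey
    simp only [Complex.mul_im, Complex.sub_re, Complex.sub_im, Complex.conj_re,
      Complex.conj_im, Complex.ofReal_re, Complex.ofReal_im] at this
    linarith
  have hNpos : 0 < N := by
    obtain ⟨i0, hi0⟩ := Function.ne_iff.mp hv0
    have h1 : Complex.normSq (v i0) ≤ N := by
      rw [hN]
      exact Finset.single_le_sum (fun i _ => Complex.normSq_nonneg (v i)) (Finset.mem_univ i0)
    have h2 : 0 < Complex.normSq (v i0) := Complex.normSq_pos.mpr hi0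
    linarith
  have hq : 0 ≤ Complex.normSq (v last) := Complex.normSq_nonneg _
  have hvlast : v last = 0 := by
    have h1 : a.im * Complex.normSq (v last) ≤ 0 := by
      rw [← hIm]; nlinarith
    have h2 : Complex.normSq (v last) = 0 := by nlinarith
    exact Complex.normSq_eq_zero.mp h2
  have hlamim : lam.im = 0 := by
    rw [hvlast] at hIm
    simp at hIm
    rcases hIm with h | h
    · exact h
    · linarith
  have hlamre : lam = (lam.re : ℂ) := Complex.ext rfl (by simp [hlamim])
  -- the function V on ℕ
  set V : ℕ → ℂ := fun k => if h : k < n then v ⟨k, h⟩ else 0 with hVdef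
  have hVk : ∀ (k : ℕ) (h : k < n), v ⟨k, h⟩ = V k := by
    intro k h
    simp only [hVdef]
    rw [dif_pos h]
  have hVlast : V (n - 1) = 0 := by
    have h : n - 1 < n := by omega
    rw [← hVk (n - 1) h]
    have he : (⟨n - 1, h⟩ : Fin n) = last := Fin.ext (by rw [hlast])
    rw [he, hvlast]
  have hsum : ∀ (i : Fin n) (s : Finset (Fin n)),
      (∀ j : Fin n, J i j ≠ 0 → j ∈ s) →
      ∑ j ∈ s, J i j * v j = lam * v i := by
    intro i s hs
    rw [← hrow i]
    exact Finset.sum_subset (Finset.subset_univ s)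
      (fun j _ hj => by rw [not_not.mp (mt (hs j) hj), zero_mul])
  -- row 0
  have hEq0 : b 0 * V 1 = (lam - (c 0 : ℂ)) * V 0 := by
    have h0 : (0 : ℕ) < n := by omega
    have h1 : (1 : ℕ) < n := by omega
    have hmem : ∀ j : Fin n, J (⟨0, h0⟩ : Fin n) j ≠ 0 →
        j ∈ ({⟨0, h0⟩, ⟨1, h1⟩, last} : Finset (Fin n)) := by
      intro j hj
      simp only [hJ, cj_apply, true_and] at hj
      simp only [Finset.mem_insert, Finset.mem_singleton, Fin.ext_iff, hlast]
      split_ifs at hj <;> first | omega | exact absurd rfl hj | (exfalso; assumption)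
    have := hsum ⟨0, h0⟩ _ hmem
    rw [Finset.sum_insert (by simp only [Finset.mem_insert, Finset.mem_singleton, Fin.ext_iff]; omega),
        Finset.sum_insert (by simp only [Finset.mem_insert, Finset.mem_singleton, Fin.ext_iff]; omega),
        Finset.sum_singleton] at this
    have e1 : J (⟨0, h0⟩ : Fin n) ⟨0, h0⟩ = ((c 0 : ℝ) : ℂ) := by
      simp only [hJ, cj_apply]
      split_ifs <;> first | rfl | (exfalso; omega) | (exfalso; assumption) | tauto
    have e2 : J (⟨0, h0⟩ : Fin n) ⟨1, h1⟩ = b 0 := by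
      simp only [hJ, cj_apply]
      split_ifs <;> first | rfl | (exfalso; omega) | (exfalso; assumption) | tauto
    have e3 : J (⟨0, h0⟩ : Fin n) last = conj (b (n - 1)) := by
      simp only [hJ, cj_apply, hlast]
      split_ifs <;> first | rfl | (exfalso; omega) | (exfalso; assumption) | tauto
    rw [e1, e2, e3, hVk 0 h0, hVk 1 h1] at this
    have hvl : v last = V (n - 1) := by
      have h : n - 1 < n := by omega
      have he : (⟨n - 1, h⟩ : Fin n) = last := Fin.ext (by rw [hlast])
      rw [← he]; exact hVk (n - 1) h
    rw [hvl, hVlast] at this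
    linear_combination this
  -- middle rows
  have hEqMid : ∀ k : ℕ, 1 ≤ k → k ≤ n - 3 →
      b k * V (k + 1) = (lam - (c k : ℂ)) * V k - conj (b (k - 1)) * V (k - 1) := by
    intro k hk1 hk3
    have hkn : k < n := by omega
    have hkm : k - 1 < n := by omega
    have hkp : k + 1 < n := by omega
    have hmem : ∀ j : Fin n, J (⟨k, hkn⟩ : Fin n) j ≠ 0 →
        j ∈ ({⟨k - 1, hkm⟩, ⟨k, hkn⟩, ⟨k + 1, hkp⟩} : Finset (Fin n)) := by
      intro j hj
      simp only [hJ, cj_apply] at hj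
      simp only [Finset.mem_insert, Finset.mem_singleton, Fin.ext_iff]
      split_ifs at hj <;> first | omega | exact absurd rfl hj | (exfalso; assumption)
    have := hsum ⟨k, hkn⟩ _ hmem
    rw [Finset.sum_insert (by simp only [Finset.mem_insert, Finset.mem_singleton, Fin.ext_iff]; omega),
        Finset.sum_insert (by simp only [Finset.mem_insert, Finset.mem_singleton, Fin.ext_iff]; omega),
        Finset.sum_singleton] at this
    have e1 : J (⟨k, hkn⟩ : Fin n) ⟨k - 1, hkm⟩ = conj (b (k - 1)) := by
      simp only [hJ, cj_apply]
      split_ifs <;> first | rfl | (exfalso; omega) | (exfalso; assumption) | tauto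
    have e2 : J (⟨k, hkn⟩ : Fin n) ⟨k, hkn⟩ = ((c k : ℝ) : ℂ) := by
      simp only [hJ, cj_apply]
      split_ifs <;> first | rfl | (exfalso; omega) | (exfalso; assumption) | tauto
    have e3 : J (⟨k, hkn⟩ : Fin n) ⟨k + 1, hkp⟩ = b k := by
      simp only [hJ, cj_apply]
      split_ifs <;> first | rfl | (exfalso; omega) | (exfalso; assumption) | tauto
    rw [e1, e2, e3, hVk _ hkm, hVk _ hkn, hVk _ hkp] at this
    linear_combination this
  -- last row
  have hEqLast : b (n - 1) * V 0 + conj (b (n - 2)) * V (n - 2) = 0 := by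
    have h0 : (0 : ℕ) < n := by omega
    have h2 : n - 2 < n := by omega
    have hmem : ∀ j : Fin n, J last j ≠ 0 →
        j ∈ ({⟨0, h0⟩, ⟨n - 2, h2⟩, last} : Finset (Fin n)) := by
      intro j hj
      simp only [hJ, cj_apply, hlast] at hj
      simp only [Finset.mem_insert, Finset.mem_singleton, Fin.ext_iff, hlast]
      split_ifs at hj <;> first | omega | exact absurd rfl hj | (exfalso; assumption)
    have := hsum last _ hmem
    rw [Finset.sum_insert (by simp only [Finset.mem_insert, Finset.mem_singleton, Fin.ext_iff]; omega),
        Finset.sum_insert (by simp only [Finset.mem_insert, Finset.mem_singleton, Fin.ext_iff]; omega),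
        Finset.sum_singleton] at this
    have e1 : J last (⟨0, h0⟩ : Fin n) = b (n - 1) := by
      simp only [hJ, cj_apply, hlast]
      split_ifs <;> first | rfl | (exfalso; omega) | (exfalso; assumption) | tauto
    have e2 : J last (⟨n - 2, h2⟩ : Fin n) = conj (b (n - 2)) := by
      simp only [hJ, cj_apply, hlast]
      split_ifs <;> first | rfl | (exfalso; omega) | (exfalso; assumption) | tauto
    have e3 : J last last = a := by
      simp only [hJ, cj_apply, hlast]
      split_ifs <;> first | rfl | (exfalso; omega) | (exfalso; assumption) | tauto
    have hvl : v last = V (n - 1) := by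
      have h : n - 1 < n := by omega
      have he : (⟨n - 1, h⟩ : Fin n) = last := Fin.ext (by rw [hlast])
      rw [← he]; exact hVk (n - 1) h
    rw [e1, e2, e3, hVk 0 h0, hVk _ h2, hvl, hVlast] at this
    linear_combination this
  -- the inductive claim
  have main : ∀ k : ℕ, k ≤ n - 2 →
      ∃ t : ℝ, (∏ j ∈ Finset.range k, b j) * V k = (t : ℂ) * V 0 := by
    intro k
    induction k using Nat.strong_induction_on with
    | _ k ih =>
      match k with
      | 0 => intro _; exact ⟨1, by simp⟩
      | 1 =>
        intro _
        refine ⟨lam.re - c 0, ?_⟩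
        rw [Finset.prod_range_one]
        push_cast
        rw [← hlamre]
        exact hEq0
      | (m + 2) =>
        intro hm
        obtain ⟨t1, ht1⟩ := ih (m + 1) (by omega) (by omega)
        obtain ⟨t0, ht0⟩ := ih m (by omega) (by omega)
        have hmid := hEqMid (m + 1) (by omega) (by omega)
        simp only [Nat.add_sub_cancel] at hmid
        refine ⟨(lam.re - c (m + 1)) * t1 - Complex.normSq (b m) * t0, ?_⟩
        rw [Finset.prod_range_succ, Finset.prod_range_succ]
        have hp1 : (∏ j ∈ Finset.range (m + 1), b j) = (∏ j ∈ Finset.range m, b j) * b m :=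
          Finset.prod_range_succ _ _
        have hcb : conj (b m) * b m = (Complex.normSq (b m) : ℂ) := by
          rw [← Complex.mul_conj]; ring
        rw [hlamre] at hmid
        rw [hp1] at ht1
        push_cast
        linear_combination (∏ j ∈ Finset.range m, b j) * b m * hmid
          + ((lam.re : ℂ) - (c (m + 1) : ℂ)) * ht1
          - conj (b m) * b m * ht0 - ((t0 : ℂ) * V 0) * hcb
  -- V 0 ≠ 0
  have hV0 : V 0 ≠ 0 := by
    intro hV0
    apply hv0
    funext i
    have hi : (i : ℕ) < n := i.isLt
    have hiv : v i = V (i : ℕ) := by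
      have : i = (⟨(i : ℕ), hi⟩ : Fin n) := Fin.ext rfl
      rw [this]; exact hVk _ hi
    rcases eq_or_ne ((i : ℕ)) (n - 1) with he | he
    · have : i = last := Fin.ext (he.trans hlast.symm)
      rw [this, hvlast]; rfl
    · have hile : (i : ℕ) ≤ n - 2 := by omega
      obtain ⟨t, ht⟩ := main (i : ℕ) hile
      rw [hV0, mul_zero] at ht
      have hP : (∏ j ∈ Finset.range (i : ℕ), b j) ≠ 0 := by
        rw [Finset.prod_ne_zero_iff]
        exact fun j hj => hb j (by simp at hj; omega)
      have : V (i : ℕ) = 0 := by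
        rcases mul_eq_zero.mp ht with h | h
        · exact absurd h hP
        · exact h
      rw [hiv, this]; rfl
  -- the contradiction with hβ
  obtain ⟨t, ht⟩ := main (n - 2) le_rfl
  have hprod : (∏ k ∈ Finset.range n, b k)
      = (∏ k ∈ Finset.range (n - 2), b k) * b (n - 2) * b (n - 1) := by
    have h1 : n - 1 + 1 = n := by omega
    have h2 : n - 2 + 1 = n - 1 := by omega
    rw [← h1, Finset.prod_range_succ, h1, ← h2, Finset.prod_range_succ, h2]
  have hcb : conj (b (n - 2)) * b (n - 2) = (Complex.normSq (b (n - 2)) : ℂ) := by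
    rw [← Complex.mul_conj]; ring
  have hfinal : (∏ k ∈ Finset.range n, b k) * V 0
      = -(Complex.normSq (b (n - 2)) * t : ℝ) * V 0 := by
    push_cast
    rw [hprod]
    linear_combination (∏ k ∈ Finset.range (n - 2), b k) * b (n - 2) * hEqLast
      - conj (b (n - 2)) * b (n - 2) * ht - ((t : ℂ) * V 0) * hcb
  have hβeq : (∏ k ∈ Finset.range n, b k) = -(Complex.normSq (b (n - 2)) * t : ℝ) :=
    mul_right_cancel₀ hV0 hfinal
  rw [hβeq] at hβ
  simp at hβ

end Stmt11Aux

/-- if `β = b_1⋯b_n` is nonreal and `Im a_n > 0` (resp. `Im a_n < 0`),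
then every eigenvalue of `J_n` lies in the open upper (resp. lower) half-plane. -/
theorem stmt11 (n : ℕ) (hn : 3 ≤ n) (c : ℕ → ℝ) (b : ℕ → ℂ) (a : ℂ)
    (hb : ∀ k : ℕ, k < n → b k ≠ 0)
    (hβ : (∏ k ∈ Finset.range n, b k).im ≠ 0) :
    (0 < a.im →
      ∀ lam : ℂ, (cornerJacobi n c b a).charpoly.IsRoot lam → 0 < lam.im) ∧
    (a.im < 0 →
      ∀ lam : ℂ, (cornerJacobi n c b a).charpoly.IsRoot lam → lam.im < 0) := by
  constructor
  · intro ha lam hroot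
    exact Stmt11Aux.upper n hn c b a hb hβ ha lam hroot
  · intro ha lam hroot
    have hroot' : (cornerJacobi n c (fun k => (starRingEnd ℂ) (b k))
        ((starRingEnd ℂ) a)).charpoly.IsRoot ((starRingEnd ℂ) lam) := by
      rw [← Stmt11Aux.cj_map_conj n hn c b a, Matrix.charpoly_map]
      show Polynomial.eval _ _ = 0
      rw [Polynomial.eval_map, Polynomial.eval₂_at_apply]
      rw [hroot]
      simp
    have hb' : ∀ k : ℕ, k < n → (starRingEnd ℂ) (b k) ≠ 0 := by
      intro k hk
      simpa using hb k hk
    have hβ' : (∏ k ∈ Finset.range n, (starRingEnd ℂ) (b k)).im ≠ 0 := by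
      have hmp : (∏ k ∈ Finset.range n, (starRingEnd ℂ) (b k))
          = (starRingEnd ℂ) (∏ k ∈ Finset.range n, b k) := (map_prod _ _ _).symm
      rw [hmp, Complex.conj_im]
      exact neg_ne_zero.mpr hβ
    have ha' : 0 < ((starRingEnd ℂ) a).im := by simpa using ha
    have := Stmt11Aux.upper n hn c (fun k => (starRingEnd ℂ) (b k)) ((starRingEnd ℂ) a)
      hb' hβ' ha' ((starRingEnd ℂ) lam) hroot'
    simp at this
    linarith
end
end

section
/- Let J_n ∈ 𝒥_n with β = b_1⋯b_n real nonzero and Im a_n > 0. Then every eigenvalue of J_n lies in the closed upper half-plane, and an eigenvalue of J_n is real if and only if it is an eigenvalue of the leading principal submatrix J_{n−1}. -/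
open Polynomial Matrix Finset

noncomputable section

/-!
If `J v = λ v` with `v ≠ 0`, then `J - Jᴴ` vanishes except for the entry `2i Im a` in the
lower-right corner, so comparing imaginary parts of `v* J v = λ ‖v‖²` gives
`Im λ ‖v‖² = Im a |v_n|² ≥ 0`. When `λ` is real this forces `v_n = 0`, and the remaining
coordinates form an eigenvector of `J_{n-1}`; conversely `J_{n-1}` is Hermitian, so its
eigenvalues are real.
-/

theorem sum_normSq_pos {ι : Type*} [Fintype ι] {v : ι → ℂ} (hv : v ≠ 0) :
    0 < ∑ i, Complex.normSq (v i) := by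
  obtain ⟨i, hi⟩ := Function.ne_iff.mp hv
  exact Finset.sum_pos' (fun j _ => Complex.normSq_nonneg _)
    ⟨i, Finset.mem_univ _, Complex.normSq_pos.mpr hi⟩

namespace Matrix

variable {ι : Type*} [Fintype ι] [DecidableEq ι]

theorem isRoot_charpoly_iff_exists_mulVec_eq_smul {K : Type*} [Field K] (A : Matrix ι ι K)
    (μ : K) :
    A.charpoly.IsRoot μ ↔ ∃ v : ι → K, v ≠ 0 ∧ A *ᵥ v = μ • v := by
  rw [← charpoly_toLin', ← Module.End.hasEigenvalue_iff_isRoot_charpoly]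
  constructor
  · intro h
    obtain ⟨v, hv⟩ := h.exists_hasEigenvector
    exact ⟨v, hv.2, Module.End.mem_eigenspace_iff.mp hv.1⟩
  · rintro ⟨v, hv, hAv⟩
    exact Module.End.hasEigenvalue_of_hasEigenvector
      ⟨Module.End.mem_eigenspace_iff.mpr hAv, hv⟩

omit [DecidableEq ι] in
theorem star_dotProduct_mulVec_sub_star {R : Type*} [CommRing R] [StarRing R]
    (A : Matrix ι ι R) (v : ι → R) :
    star v ⬝ᵥ A *ᵥ v - star (star v ⬝ᵥ A *ᵥ v) = star v ⬝ᵥ (A - Aᴴ) *ᵥ v := by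
  rw [← star_dotProduct, star_mulVec, ← dotProduct_mulVec, sub_mulVec, dotProduct_sub]

theorem im_star_dotProduct_mulVec_of_isHermitian_except {A : Matrix ι ι ℂ} {p : ι}
    (hA : ∀ i j, (i, j) ≠ (p, p) → star (A j i) = A i j) (v : ι → ℂ) :
    (star v ⬝ᵥ A *ᵥ v).im = (A p p).im * Complex.normSq (v p) := by
  have hskew : A - Aᴴ = single p p (A p p - star (A p p)) := by
    ext i j
    by_cases hij : (i, j) = (p, p)
    · obtain ⟨rfl, rfl⟩ := Prod.mk.inj hij
      simp
    · rw [sub_apply, conjTranspose_apply, hA i j hij, sub_self]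
      exact (single_apply_of_ne p p _ i j fun h => hij (by rw [← h.1, ← h.2])).symm
  have h := star_dotProduct_mulVec_sub_star A v
  rw [hskew, single_mulVec_eq, dotProduct_smul, dotProduct_single, Pi.star_apply, smul_eq_mul,
    RCLike.star_def, Complex.sub_conj, Complex.sub_conj] at h
  have hI : ((2 * (star v ⬝ᵥ A *ᵥ v).im : ℝ) : ℂ) * Complex.I
      = ((2 * ((A p p).im * Complex.normSq (v p)) : ℝ) : ℂ) * Complex.I := by
    rw [h, Complex.ofReal_mul, Complex.ofReal_mul, Complex.ofReal_mul,
      Complex.normSq_eq_conj_mul_self]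
    ring
  have h2 := Complex.ofReal_injective (mul_right_cancel₀ Complex.I_ne_zero hI)
  linarith

theorem im_mul_sum_normSq_of_isHermitian_except {A : Matrix ι ι ℂ} {p : ι}
    (hA : ∀ i j, (i, j) ≠ (p, p) → star (A j i) = A i j) {v : ι → ℂ} {μ : ℂ}
    (hv : A *ᵥ v = μ • v) :
    μ.im * ∑ i, Complex.normSq (v i) = (A p p).im * Complex.normSq (v p) := by
  have hnorm : star v ⬝ᵥ v = ((∑ i, Complex.normSq (v i) : ℝ) : ℂ) := by
    simp only [dotProduct, Pi.star_apply, Complex.ofReal_sum, Complex.normSq_eq_conj_mul_self]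
    rfl
  rw [← im_star_dotProduct_mulVec_of_isHermitian_except hA v, hv, dotProduct_smul, smul_eq_mul,
    hnorm, Complex.mul_im, Complex.ofReal_re, Complex.ofReal_im, mul_zero, zero_add]

theorem IsHermitian.im_eq_zero_of_mulVec_eq_smul {A : Matrix ι ι ℂ} (hA : A.IsHermitian)
    {v : ι → ℂ} (hv0 : v ≠ 0) {μ : ℂ} (hv : A *ᵥ v = μ • v) : μ.im = 0 := by
  obtain ⟨p, -⟩ := Function.ne_iff.mp hv0
  have hp : (A p p).im = 0 := Complex.conj_eq_iff_im.mp (hA.apply p p)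
  have h := im_mul_sum_normSq_of_isHermitian_except (p := p) (fun i j _ => hA.apply i j) hv
  rw [hp, zero_mul] at h
  exact (mul_eq_zero.mp h).resolve_right (sum_normSq_pos hv0).ne'

theorem mulVec_submatrix_castSucc_of_last_eq_zero {R : Type*} [Semiring R] {m : ℕ}
    {A : Matrix (Fin (m + 1)) (Fin (m + 1)) R} {v : Fin (m + 1) → R} {μ : R}
    (hv : A *ᵥ v = μ • v) (hlast : v (Fin.last m) = 0) :
    A.submatrix Fin.castSucc Fin.castSucc *ᵥ (v ∘ Fin.castSucc) =
      μ • (v ∘ Fin.castSucc) := by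
  funext i
  have hi := congrFun hv i.castSucc
  simpa [mulVec, dotProduct, Fin.sum_univ_castSucc, hlast] using hi

end Matrix

section cornerJacobi

variable {m : ℕ} (c : ℕ → ℝ) (b : ℕ → ℂ) (a : ℂ)

theorem cornerJacobi_star_apply (i j : Fin (m + 1)) (h : (i, j) ≠ (Fin.last m, Fin.last m)) :
    star (cornerJacobi (m + 1) c b a j i) = cornerJacobi (m + 1) c b a i j := by
  have h' : (i : ℕ) = m → (j : ℕ) ≠ m := by simpa [Fin.ext_iff] using h
  have hi := i.isLt
  have hj := j.isLt
  simp only [cornerJacobi, of_apply, Nat.add_sub_cancel]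
  split_ifs <;> first
    | omega
    | (simp; try exact congrArg c (by omega))

theorem cornerJacobi_last_last : cornerJacobi (m + 1) c b a (Fin.last m) (Fin.last m) = a := by
  simp [cornerJacobi]

theorem cornerJacobiSub_eq_submatrix :
    cornerJacobiSub (m + 1) c b a =
      (cornerJacobi (m + 1) c b a).submatrix Fin.castSucc Fin.castSucc :=
  rfl

theorem cornerJacobiSub_isHermitian : (cornerJacobiSub (m + 1) c b a).IsHermitian :=
  IsHermitian.ext fun i j => cornerJacobi_star_apply c b a _ _ (by simp [Fin.ext_iff]; omega)

end cornerJacobi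

theorem stmt12_general (n : ℕ) (c : ℕ → ℝ) (b : ℕ → ℂ) (a : ℂ)
    (ha : 0 < a.im) :
    ∀ lam : ℂ, (cornerJacobi n c b a).charpoly.IsRoot lam →
      0 ≤ lam.im ∧ (lam.im = 0 ↔ (cornerJacobiSub n c b a).charpoly.IsRoot lam) := by
  intro lam hroot
  obtain ⟨v, hv0, hv⟩ := (isRoot_charpoly_iff_exists_mulVec_eq_smul _ _).mp hroot
  obtain ⟨m, rfl⟩ : ∃ m, n = m + 1 :=
    Nat.exists_eq_succ_of_ne_zero (by rintro rfl; exact hv0 (Subsingleton.elim _ _))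
  have hcorner := im_mul_sum_normSq_of_isHermitian_except (cornerJacobi_star_apply c b a) hv
  rw [cornerJacobi_last_last] at hcorner
  have hpos := sum_normSq_pos hv0
  refine ⟨nonneg_of_mul_nonneg_left (hcorner ▸ mul_nonneg ha.le (Complex.normSq_nonneg _)) hpos,
    fun him => ?_, fun hsub => ?_⟩
  · have hlast : v (Fin.last m) = 0 := by
      rw [him, zero_mul, eq_comm, mul_eq_zero] at hcorner
      exact Complex.normSq_eq_zero.mp (hcorner.resolve_left ha.ne')
    rw [isRoot_charpoly_iff_exists_mulVec_eq_smul, cornerJacobiSub_eq_submatrix]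
    refine ⟨v ∘ Fin.castSucc, fun h => hv0 ?_,
      mulVec_submatrix_castSucc_of_last_eq_zero hv hlast⟩
    funext i
    exact Fin.lastCases hlast (fun j => congrFun h j) i
  · obtain ⟨w, hw0, hw⟩ := (isRoot_charpoly_iff_exists_mulVec_eq_smul _ _).mp hsub
    exact (cornerJacobiSub_isHermitian c b a).im_eq_zero_of_mulVec_eq_smul hw0 hw

/-- if `β = b_1⋯b_n` is real nonzero and `Im a_n > 0`, then every
eigenvalue of `J_n` lies in the closed upper half-plane, and an eigenvalue of `J_n`
is real if and only if it is an eigenvalue of the leading submatrix `J_{n−1}`. -/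
theorem stmt12 (n : ℕ) (hn : 3 ≤ n) (c : ℕ → ℝ) (b : ℕ → ℂ) (a : ℂ)
    (hb : ∀ k : ℕ, k < n → b k ≠ 0)
    (hβreal : (∏ k ∈ Finset.range n, b k).im = 0)
    (hβne : (∏ k ∈ Finset.range n, b k) ≠ 0)
    (ha : 0 < a.im) :
    ∀ lam : ℂ, (cornerJacobi n c b a).charpoly.IsRoot lam →
      0 ≤ lam.im ∧ (lam.im = 0 ↔ (cornerJacobiSub n c b a).charpoly.IsRoot lam) :=
  stmt12_general n c b a ha
end
end

section
/- Let J_n ∈ 𝒥_n with Im a_n ≠ 0. Then the characteristic polynomial satisfies χ_n(λ) = p(λ) − i (Im a_n) χ_{n−1}(λ), where p is a polynomial with real coefficients and χ_{n−1} is the (real-rooted) characteristic polynomial of J_{n−1}. In particular χ_n(μ_k) ∈ ℝ for every eigenvalue μ_k of J_{n−1}. -/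
open Polynomial Matrix Finset

noncomputable section

/-!
The determinant is affine in the `(n, n)` entry: writing `a = Re a + i Im a` and expanding along
the last row gives `χ_n = χ(J⁰) − i (Im a) χ_{n−1}`, where `J⁰` is `J_n` with `a` replaced by
`Re a`. Now `J⁰` is Hermitian, so `χ(J⁰)` has real coefficients, and `J_{n−1}` is Hermitian, so
its eigenvalues are real; at an eigenvalue `μ` of `J_{n−1}` the second term vanishes and the
first is a real polynomial evaluated at a real point.
-/

namespace Matrix

variable {R : Type*} [CommRing R] {m : ℕ}

theorem det_updateRow_last_add_single (B : Matrix (Fin (m + 1)) (Fin (m + 1)) R) (s : R) :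
    (B.updateRow (Fin.last m) (B (Fin.last m) + Pi.single (Fin.last m) s)).det
      = B.det + s * (B.submatrix Fin.castSucc Fin.castSucc).det := by
  have hsingle : Pi.single (Fin.last m) s = s • Pi.single (Fin.last m) (1 : R) := by
    rw [← Pi.single_smul', smul_eq_mul, mul_one]
  rw [det_updateRow_add, updateRow_eq_self, hsingle, det_updateRow_smul, ← adjugate_apply,
    adjugate_fin_succ_eq_det_submatrix, Fin.succAbove_last, ← two_mul, pow_mul]
  simp

theorem charmatrix_add_single_last (M : Matrix (Fin (m + 1)) (Fin (m + 1)) R) (d : R) :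
    charmatrix (M + single (Fin.last m) (Fin.last m) d)
      = (charmatrix M).updateRow (Fin.last m)
          (charmatrix M (Fin.last m) + Pi.single (Fin.last m) (-C d)) := by
  refine Matrix.ext fun i j => ?_
  by_cases hi : i = Fin.last m
  · subst hi
    by_cases hj : j = Fin.last m
    · subst hj
      simp only [charmatrix_apply_eq, add_apply, single_apply_same, map_add, updateRow_self,
        Pi.add_apply, Pi.single_eq_same]
      ring
    · simp [hj, Ne.symm hj]
  · simp [charmatrix_apply, hi, Ne.symm hi]

theorem charmatrix_submatrix {ι κ : Type*} [Fintype ι] [DecidableEq ι] [Fintype κ]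
    [DecidableEq κ] (M : Matrix ι ι R) {e : κ → ι} (he : Function.Injective e) :
    charmatrix (M.submatrix e e) = (charmatrix M).submatrix e e := by
  refine Matrix.ext fun i j => ?_
  by_cases hij : i = j
  · subst hij; simp [charmatrix_apply_eq]
  · simp [charmatrix_apply_ne _ _ _ hij, charmatrix_apply_ne _ _ _ (he.ne hij)]

theorem charpoly_add_single_last (M : Matrix (Fin (m + 1)) (Fin (m + 1)) R) (d : R) :
    (M + single (Fin.last m) (Fin.last m) d).charpoly
      = M.charpoly - C d * (M.submatrix Fin.castSucc Fin.castSucc).charpoly := by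
  rw [charpoly, charmatrix_add_single_last, det_updateRow_last_add_single, charpoly, charpoly,
    charmatrix_submatrix _ (Fin.castSucc_injective m)]
  ring

end Matrix

namespace Matrix.IsHermitian

variable {𝕜 n : Type*} [RCLike 𝕜] [Fintype n] [DecidableEq n] {A : Matrix n n 𝕜}

theorem exists_charpoly_eq_map_algebraMap (hA : A.IsHermitian) :
    ∃ p : ℝ[X], A.charpoly = p.map (algebraMap ℝ 𝕜) :=
  ⟨∏ i, (X - C (hA.eigenvalues i)), by simp [hA.charpoly_eq, Polynomial.map_prod]⟩

theorem exists_eq_ofReal_of_isRoot_charpoly (hA : A.IsHermitian) {μ : 𝕜}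
    (hμ : A.charpoly.IsRoot μ) : ∃ r : ℝ, μ = r := by
  have hmem : μ ∈ A.charpoly.roots := (mem_roots (charpoly_monic A).ne_zero).mpr hμ
  rw [hA.roots_charpoly_eq_eigenvalues, Multiset.mem_map] at hmem
  obtain ⟨i, -, hi⟩ := hmem
  exact ⟨hA.eigenvalues i, hi.symm⟩

end Matrix.IsHermitian

theorem cornerJacobi_ofReal_isHermitian (n : ℕ) (c : ℕ → ℝ) (b : ℕ → ℂ) (r : ℝ) :
    (cornerJacobi n c b r).IsHermitian := by
  refine Matrix.ext fun i j => ?_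
  simp only [conjTranspose_apply, cornerJacobi, of_apply]
  split_ifs <;> first
    | (exfalso; omega)
    | simp_all

theorem cornerJacobi_succ_eq_add_single (m : ℕ) (c : ℕ → ℝ) (b : ℕ → ℂ) (a a' : ℂ) :
    cornerJacobi (m + 1) c b a
      = cornerJacobi (m + 1) c b a' + single (Fin.last m) (Fin.last m) (a - a') := by
  refine Matrix.ext fun i j => ?_
  simp only [Matrix.add_apply, single_apply, cornerJacobi, of_apply, Fin.ext_iff, Fin.val_last,
    Nat.add_sub_cancel]
  split_ifs <;> first | ring1 | (exfalso; omega)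

theorem cornerJacobiSub_succ (m : ℕ) (c : ℕ → ℝ) (b : ℕ → ℂ) (a a' : ℂ) :
    cornerJacobiSub (m + 1) c b a
      = (cornerJacobi (m + 1) c b a').submatrix Fin.castSucc Fin.castSucc := by
  refine Matrix.ext fun i j => ?_
  have hi := i.isLt
  simp only [cornerJacobiSub, cornerJacobi, submatrix_apply, of_apply, Fin.val_castLE,
    Fin.val_castSucc]
  split_ifs <;> first | rfl | omega

theorem stmt13_general (n : ℕ) (hn : 3 ≤ n) (c : ℕ → ℝ) (b : ℕ → ℂ) (a : ℂ) :
    (∃ p : Polynomial ℝ,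
      (cornerJacobi n c b a).charpoly
        = p.map Complex.ofRealHom
            - Polynomial.C (Complex.I * (a.im : ℂ)) * (cornerJacobiSub n c b a).charpoly) ∧
    ∀ μ : ℂ, (cornerJacobiSub n c b a).charpoly.IsRoot μ →
      ((cornerJacobi n c b a).charpoly.eval μ).im = 0 := by
  obtain ⟨m, rfl⟩ : ∃ m, n = m + 1 := ⟨n - 1, by omega⟩
  have hsplit : (cornerJacobi (m + 1) c b a).charpoly
      = (cornerJacobi (m + 1) c b a.re).charpoly
        - C (Complex.I * (a.im : ℂ)) * (cornerJacobiSub (m + 1) c b a).charpoly := by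
    rw [cornerJacobi_succ_eq_add_single m c b a a.re, charpoly_add_single_last,
      cornerJacobiSub_succ m c b a a.re]
    rw [show a - a.re = Complex.I * a.im by apply Complex.ext <;> simp]
  obtain ⟨p, hp⟩ :=
    (cornerJacobi_ofReal_isHermitian (m + 1) c b a.re).exists_charpoly_eq_map_algebraMap
  rw [hp] at hsplit
  refine ⟨⟨p, hsplit⟩, fun μ hμ => ?_⟩
  have hsub : (cornerJacobiSub (m + 1) c b a).IsHermitian := by
    rw [cornerJacobiSub_succ m c b a a.re]
    exact (cornerJacobi_ofReal_isHermitian (m + 1) c b a.re).submatrix _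
  obtain ⟨r, rfl⟩ := hsub.exists_eq_ofReal_of_isRoot_charpoly hμ
  rw [hsplit, eval_sub, eval_mul, hμ.eq_zero, mul_zero, sub_zero, eval_map_algebraMap,
    ← Polynomial.ofReal_eval]
  exact Complex.ofReal_im _

/-- if `Im a_n ≠ 0`, then `χ_n(λ) = p(λ) − i (Im a_n) χ_{n−1}(λ)` for
some real polynomial `p`; in particular `χ_n(μ) ∈ ℝ` for every eigenvalue `μ` of
`J_{n−1}`. -/
theorem stmt13 (n : ℕ) (hn : 3 ≤ n) (c : ℕ → ℝ) (b : ℕ → ℂ) (a : ℂ)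
    (hb : ∀ k : ℕ, k < n → b k ≠ 0)
    (ha : a.im ≠ 0) :
    (∃ p : Polynomial ℝ,
      (cornerJacobi n c b a).charpoly
        = p.map Complex.ofRealHom
            - Polynomial.C (Complex.I * (a.im : ℂ)) * (cornerJacobiSub n c b a).charpoly) ∧
    ∀ μ : ℂ, (cornerJacobiSub n c b a).charpoly.IsRoot μ →
      ((cornerJacobi n c b a).charpoly.eval μ).im = 0 :=
  stmt13_general n hn c b a
end
end
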